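/- Let G' with weights w̃' be the dummy extension of a bipartite graph as above (dummy vertices in D ⊆ V⁻-side, each joined to all of V⁺ by weight-0 edges), let μ' be a perfect matching in G', and assume (G'_{μ'}, w̃'_{μ'}) has no negative cycle. Then for any two distinct dummy vertices v₁, v₂ ∈ D that are reachable from a fixed vertex s ∈ V⁺ in G'_{μ'}, the weight of a shortest directed path from s to v₁ equals the weight of a shortest directed path from s to v₂. -/

import Mathlib

/-!  Common setup: weighted bipartite graphs `G = (V⁺, V⁻; E)` with `V⁺ = α`, `V⁻ = β`,
edges directed from `V⁺` to `V⁻`, auxiliary graphs of matchings, walks and cycles. -/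

variable {α β : Type*}

/-- Directed adjacency of the auxiliary graph `G_μ`: non-matching edges go from `V⁺` to `V⁻`,
matching edges are reversed. -/
def auxAdj (E μ : Finset (α × β)) : α ⊕ β → α ⊕ β → Prop
  | Sum.inl u, Sum.inr v => (u, v) ∈ E ∧ (u, v) ∉ μ
  | Sum.inr v, Sum.inl u => (u, v) ∈ μ
  | _, _ => False

/-- The auxiliary weight `w_μ`, as a function on pairs of vertices. -/
def auxW (w : α × β → ℝ) : α ⊕ β → α ⊕ β → ℝ
  | Sum.inl u, Sum.inr v => w (u, v)
  | Sum.inr v, Sum.inl u => - w (u, v)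
  | _, _ => 0

/-- Weight of a walk, given by its list of vertices. -/
def walkWeight {V : Type*} (W : V → V → ℝ) (l : List V) : ℝ :=
  ((l.zip l.tail).map fun p => W p.1 p.2).sum

/-- A (simple) directed path from `s` to `t`, given by its list of vertices. -/
def IsDiPath {V : Type*} (adj : V → V → Prop) (s t : V) (l : List V) : Prop :=
  l.head? = some s ∧ l.getLast? = some t ∧ l.Chain' adj ∧ l.Nodup

/-- A (simple) directed cycle, given by the list of its vertices (the closing edge
from the last vertex back to the first is implicit). -/
def IsDiCycle {V : Type*} (adj : V → V → Prop) (l : List V) : Prop :=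
  l ≠ [] ∧ l.Nodup ∧ (l ++ l.take 1).Chain' adj

/-- Total auxiliary weight of a directed cycle (including the closing edge). -/
def cycleWeight {V : Type*} (W : V → V → ℝ) (l : List V) : ℝ :=
  walkWeight W (l ++ l.take 1)

/-- The underlying undirected edge of a dart of the auxiliary graph. -/
def undEdge : (α ⊕ β) × (α ⊕ β) → Option (α × β)
  | (Sum.inl u, Sum.inr v) => some (u, v)
  | (Sum.inr v, Sum.inl u) => some (u, v)
  | _ => none

/-- The set of underlying edges of `G` used by a walk in the auxiliary graph. -/
def usedEdges [DecidableEq α] [DecidableEq β] (l : List (α ⊕ β)) : Finset (α × β) :=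
  ((l.zip l.tail).filterMap undEdge).toFinset

/-- An edge set is a matching if every vertex appears at most once. -/
def IsMatching (μ : Finset (α × β)) : Prop :=
  ∀ e ∈ μ, ∀ f ∈ μ, (e.1 = f.1 ∨ e.2 = f.2) → e = f

/-- A perfect matching: a matching contained in `E` covering every vertex. -/
def IsPerfectMatching (E μ : Finset (α × β)) : Prop :=
  μ ⊆ E ∧ IsMatching μ ∧ (∀ u : α, ∃ v : β, (u, v) ∈ μ) ∧ (∀ v : β, ∃ u : α, (u, v) ∈ μ)

/-- The weight of a matching. -/
def matchingWeight (w : α × β → ℝ) (μ : Finset (α × β)) : ℝ := ∑ e ∈ μ, w e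

/-- A minimum-weight perfect matching. -/
def IsMinPerfectMatching (E : Finset (α × β)) (w : α × β → ℝ) (μ : Finset (α × β)) : Prop :=
  IsPerfectMatching E μ ∧
    ∀ ν : Finset (α × β), IsPerfectMatching E ν → matchingWeight w μ ≤ matchingWeight w ν

/-- `p` is a potential for `(G_μ, w_μ)`: all reduced weights are nonnegative. -/
def IsPotential (E μ : Finset (α × β)) (w : α × β → ℝ) (p : α ⊕ β → ℝ) : Prop :=
  ∀ x y : α ⊕ β, auxAdj E μ x y → auxW w x y + p x - p y ≥ 0

variable {γ : Type*}

/-- The edge set of the dummy extension `G'`: the original edges of `G` together with an edge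
from every vertex of `V⁺` to every dummy vertex (the dummy vertices form the type `γ`). -/
def extE [Fintype α] [Fintype γ] [DecidableEq α] [DecidableEq β] [DecidableEq γ]
    (E : Finset (α × β)) : Finset (α × (β ⊕ γ)) :=
  E.image (fun e => (e.1, Sum.inl e.2)) ∪
    Finset.univ.image (fun p : α × γ => (p.1, Sum.inr p.2))

/-- The weights of the dummy extension: original weights on original edges, `0` on dummy edges. -/
def extW (w : α × β → ℝ) : α × (β ⊕ γ) → ℝ
  | (u, Sum.inl v) => w (u, v)
  | (_, Sum.inr _) => 0

/-! If `u` is the `μ'`-mate of a dummy vertex `d'`, then for every other dummy `d` the detour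
`d' → u → d` is a walk in `G'_{μ'}` of weight `-0 + 0 = 0`. So every path from `s` to `d'` extends
to a walk from `s` to `d` of the same weight, and since `G'_{μ'}` has no negative cycle, cutting
the closed subwalks out of that walk leaves a path to `d` that is no heavier. Hence the shortest
path weights to `d` and to `d'` bound each other. -/

variable {V : Type*}

def IsDiWalk (adj : V → V → Prop) (s t : V) (l : List V) : Prop :=
  l.head? = some s ∧ l.getLast? = some t ∧ l.IsChain adj

theorem IsDiPath.isDiWalk {adj : V → V → Prop} {s t : V} {l : List V}
    (h : IsDiPath adj s t l) : IsDiWalk adj s t l :=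
  ⟨h.1, h.2.1, h.2.2.1⟩

section WalkWeight

variable (W : V → V → ℝ)

theorem walkWeight_cons_cons (x y : V) (l : List V) :
    walkWeight W (x :: y :: l) = W x y + walkWeight W (y :: l) := by
  simp [walkWeight]

theorem walkWeight_append_cons (a b : List V) (v : V) :
    walkWeight W (a ++ v :: b) = walkWeight W (a ++ [v]) + walkWeight W (v :: b) := by
  induction a with
  | nil => simp [walkWeight]
  | cons x a ih =>
    cases a with
    | nil => simp [walkWeight]
    | cons y a =>
      simp only [List.cons_append, walkWeight_cons_cons] at ih ⊢
      rw [ih, add_assoc]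

theorem walkWeight_concat {l : List V} {x : V} (hx : l.getLast? = some x) (y : V) :
    walkWeight W (l ++ [y]) = walkWeight W l + W x y := by
  obtain ⟨l, rfl⟩ := List.getLast?_eq_some_iff.mp hx
  rw [List.append_assoc, List.singleton_append, walkWeight_append_cons]
  simp [walkWeight]

theorem walkWeight_append_loop (a b c : List V) (v : V) :
    walkWeight W (a ++ v :: b ++ v :: c) =
      walkWeight W (v :: b ++ [v]) + walkWeight W (a ++ v :: c) := by
  have hsplit := walkWeight_append_cons W (v :: b) c v
  rw [List.append_assoc, List.cons_append, walkWeight_append_cons, ← List.cons_append, hsplit,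
    walkWeight_append_cons W a c v]
  ring

end WalkWeight

theorem List.exists_eq_append_cons_append_cons_of_not_nodup {l : List V} (h : ¬ l.Nodup) :
    ∃ (a : List V) (v : V) (b c : List V), l = a ++ v :: b ++ v :: c := by
  induction l with
  | nil => simp at h
  | cons x xs ih =>
    by_cases hx : x ∈ xs
    · obtain ⟨b, c, rfl⟩ := List.append_of_mem hx
      exact ⟨[], x, b, c, rfl⟩
    · obtain ⟨a, v, b, c, rfl⟩ := ih fun hn => h (List.nodup_cons.mpr ⟨hx, hn⟩)
      exact ⟨x :: a, v, b, c, rfl⟩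

namespace IsDiWalk

variable {adj : V → V → Prop} {W : V → V → ℝ}

theorem concat {s t y : V} {l : List V} (h : IsDiWalk adj s t l) (hy : adj t y) :
    IsDiWalk adj s y (l ++ [y]) := by
  obtain ⟨hs, ht, hc⟩ := h
  refine ⟨by simp [List.head?_append, hs], List.getLast?_concat, hc.append (by simp) ?_⟩
  simpa [ht] using hy

theorem split_loop {s t v : V} {a b c : List V} (h : IsDiWalk adj s t (a ++ v :: b ++ v :: c)) :
    IsDiWalk adj v v (v :: b ++ [v]) ∧ IsDiWalk adj s t (a ++ v :: c) := by
  obtain ⟨hs, ht, hc⟩ := h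
  rw [List.append_assoc, List.cons_append] at hc
  obtain ⟨hca, hc⟩ := List.isChain_split.mp hc
  rw [← List.cons_append] at hc
  obtain ⟨hcb, hcc⟩ := List.isChain_split.mp hc
  refine ⟨⟨rfl, List.getLast?_concat, hcb⟩, ?_, by simpa [List.getLast?_cons] using ht,
    List.isChain_split.mpr ⟨hca, hcc⟩⟩
  cases a <;> simpa using hs

theorem walkWeight_nonneg_of_closed (H : ∀ C, IsDiCycle adj C → 0 ≤ cycleWeight W C)
    {x : V} {l : List V} (h : IsDiWalk adj x x l) : 0 ≤ walkWeight W l := by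
  induction hn : l.length using Nat.strong_induction_on generalizing l x with
  | _ n ih =>
  obtain ⟨p, rfl⟩ := List.getLast?_eq_some_iff.mp h.2.1
  by_cases hp : p.Nodup
  · cases p with
    | nil => simp [walkWeight]
    | cons y p =>
      obtain rfl : x = y := by simpa using h.1.symm
      exact H (x :: p) ⟨List.cons_ne_nil _ _, hp, h.2.2⟩
  · obtain ⟨a, v, b, c, rfl⟩ := List.exists_eq_append_cons_append_cons_of_not_nodup hp
    have h' : IsDiWalk adj x x (a ++ v :: b ++ v :: (c ++ [x])) := by simpa using h
    obtain ⟨hloop, hrest⟩ := h'.split_loop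
    have hlen : (a ++ v :: b ++ v :: (c ++ [x])).length = n := by simpa using hn
    have hloop_nonneg := ih _ (by simp at hlen ⊢; omega) hloop rfl
    have hrest_nonneg := ih _ (by simp at hlen ⊢; omega) hrest rfl
    rw [show a ++ v :: b ++ v :: c ++ [x] = a ++ v :: b ++ v :: (c ++ [x]) by simp,
      walkWeight_append_loop]
    exact add_nonneg hloop_nonneg hrest_nonneg

theorem exists_isDiPath_walkWeight_le (H : ∀ C, IsDiCycle adj C → 0 ≤ cycleWeight W C)
    {s t : V} {l : List V} (h : IsDiWalk adj s t l) :
    ∃ p, IsDiPath adj s t p ∧ walkWeight W p ≤ walkWeight W l := by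
  induction hn : l.length using Nat.strong_induction_on generalizing l with
  | _ n ih =>
  by_cases hl : l.Nodup
  · exact ⟨l, ⟨h.1, h.2.1, h.2.2, hl⟩, le_rfl⟩
  · obtain ⟨a, v, b, c, rfl⟩ := List.exists_eq_append_cons_append_cons_of_not_nodup hl
    obtain ⟨hloop, hrest⟩ := h.split_loop
    obtain ⟨p, hp, hpw⟩ := ih _ (by simp at hn ⊢; omega) hrest rfl
    have hloop_nonneg := hloop.walkWeight_nonneg_of_closed H
    exact ⟨p, hp, by rw [walkWeight_append_loop]; linarith⟩

end IsDiWalk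

section DummyExtension

variable {α β γ : Type*} [Fintype α] [Fintype γ] [DecidableEq α] [DecidableEq β] [DecidableEq γ]

theorem auxAdj_extE_mate_dummy {E : Finset (α × β)} {μ : Finset (α × (β ⊕ γ))}
    (hμ : IsMatching μ) {u : α} {d d' : γ} (hu : (u, Sum.inr d') ∈ μ) (hd : d ≠ d') :
    auxAdj (extE E) μ (Sum.inl u) (Sum.inr (Sum.inr d)) := by
  refine ⟨Finset.mem_union_right _ (Finset.mem_image.mpr ⟨(u, d), Finset.mem_univ _, rfl⟩),
    fun hmem => hd ?_⟩
  simpa using hμ _ hmem _ hu (Or.inl rfl)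

theorem exists_isDiPath_to_dummy_walkWeight_le {E : Finset (α × β)}
    {μ : Finset (α × (β ⊕ γ))} {tw : α × (β ⊕ γ) → ℝ} (hμ : IsMatching μ)
    (htwd : ∀ (u : α) (d : γ), tw (u, Sum.inr d) = 0)
    (hnoneg : ∀ C, IsDiCycle (auxAdj (extE E) μ) C → 0 ≤ cycleWeight (auxW tw) C)
    {x : α ⊕ (β ⊕ γ)} {u : α} {d d' : γ} (hu : (u, Sum.inr d') ∈ μ) (hd : d ≠ d')
    {p : List (α ⊕ (β ⊕ γ))} (hp : IsDiPath (auxAdj (extE E) μ) x (Sum.inr (Sum.inr d')) p) :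
    ∃ q, IsDiPath (auxAdj (extE E) μ) x (Sum.inr (Sum.inr d)) q ∧
      walkWeight (auxW tw) q ≤ walkWeight (auxW tw) p := by
  have hwalk := (hp.isDiWalk.concat (y := Sum.inl u) hu).concat
    (auxAdj_extE_mate_dummy hμ hu hd)
  obtain ⟨q, hq, hqw⟩ := hwalk.exists_isDiPath_walkWeight_le hnoneg
  refine ⟨q, hq, hqw.trans_eq ?_⟩
  rw [walkWeight_concat _ List.getLast?_concat, walkWeight_concat _ hp.2.1]
  simp [auxW, htwd]

end DummyExtension

theorem shortest_path_weights_to_dummies_equal_general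
    [Fintype α] [Fintype γ] [DecidableEq α] [DecidableEq β] [DecidableEq γ]
    (E : Finset (α × β)) (μ' : Finset (α × (β ⊕ γ))) (s : α)
    (tw : α × (β ⊕ γ) → ℝ)
    (hμ' : IsPerfectMatching (extE (γ := γ) E) μ')
    (htwd : ∀ (u : α) (d : γ), tw (u, Sum.inr d) = 0)
    (hnoneg : ∀ C : List (α ⊕ (β ⊕ γ)),
      IsDiCycle (auxAdj (extE (γ := γ) E) μ') C → 0 ≤ cycleWeight (auxW tw) C) :
    ∀ d₁ d₂ : γ, d₁ ≠ d₂ →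
      (∃ l : List (α ⊕ (β ⊕ γ)),
        IsDiPath (auxAdj (extE (γ := γ) E) μ') (Sum.inl s) (Sum.inr (Sum.inr d₁)) l) →
      (∃ l : List (α ⊕ (β ⊕ γ)),
        IsDiPath (auxAdj (extE (γ := γ) E) μ') (Sum.inl s) (Sum.inr (Sum.inr d₂)) l) →
      ∀ l₁ l₂ : List (α ⊕ (β ⊕ γ)),
        (IsDiPath (auxAdj (extE (γ := γ) E) μ') (Sum.inl s) (Sum.inr (Sum.inr d₁)) l₁ ∧
          ∀ l' : List (α ⊕ (β ⊕ γ)),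
            IsDiPath (auxAdj (extE (γ := γ) E) μ') (Sum.inl s) (Sum.inr (Sum.inr d₁)) l' →
            walkWeight (auxW tw) l₁ ≤ walkWeight (auxW tw) l') →
        (IsDiPath (auxAdj (extE (γ := γ) E) μ') (Sum.inl s) (Sum.inr (Sum.inr d₂)) l₂ ∧
          ∀ l' : List (α ⊕ (β ⊕ γ)),
            IsDiPath (auxAdj (extE (γ := γ) E) μ') (Sum.inl s) (Sum.inr (Sum.inr d₂)) l' →
            walkWeight (auxW tw) l₂ ≤ walkWeight (auxW tw) l') →
        walkWeight (auxW tw) l₁ = walkWeight (auxW tw) l₂ := by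
  have key : ∀ d d' : γ, d ≠ d' → ∀ p q,
      (∀ r, IsDiPath (auxAdj (extE E) μ') (Sum.inl s) (Sum.inr (Sum.inr d)) r →
        walkWeight (auxW tw) p ≤ walkWeight (auxW tw) r) →
      IsDiPath (auxAdj (extE E) μ') (Sum.inl s) (Sum.inr (Sum.inr d')) q →
      walkWeight (auxW tw) p ≤ walkWeight (auxW tw) q := by
    intro d d' hd p q hmin hq
    obtain ⟨u, hu⟩ := hμ'.2.2.2 (Sum.inr d')
    obtain ⟨r, hr, hrw⟩ :=
      exists_isDiPath_to_dummy_walkWeight_le hμ'.2.1 htwd hnoneg hu hd hq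
    exact (hmin r hr).trans hrw
  intro d₁ d₂ hne _ _ l₁ l₂ ⟨hp₁, hmin₁⟩ ⟨hp₂, hmin₂⟩
  exact le_antisymm (key d₁ d₂ hne l₁ l₂ hmin₁ hp₂) (key d₂ d₁ hne.symm l₂ l₁ hmin₂ hp₁)

/-- In the dummy extension with weights `w̃'` (dummy edges of weight `0`), with
`μ'` a perfect matching and no negative cycle in `(G'_{μ'}, w̃'_{μ'})`: for any two distinct
dummy vertices `d₁, d₂` reachable from a fixed `s ∈ V⁺` in `G'_{μ'}`, the weight of a shortest
directed path from `s` to `d₁` equals that of a shortest directed path from `s` to `d₂`. -/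
theorem shortest_path_weights_to_dummies_equal
    [Fintype α] [Fintype β] [Fintype γ] [DecidableEq α] [DecidableEq β] [DecidableEq γ]
    (E : Finset (α × β)) (w : α × β → ℝ) (μ' : Finset (α × (β ⊕ γ))) (s : α)
    (tw : α × (β ⊕ γ) → ℝ)
    (hbal : Fintype.card β < Fintype.card α)
    (hγ : Fintype.card γ = Fintype.card α - Fintype.card β)
    (hw : ∀ e ∈ E, w e ≤ 0)
    (hμ' : IsPerfectMatching (extE (γ := γ) E) μ')
    (htw : ∀ e ∈ extE (γ := γ) E, e.1 ≠ s → tw e = extW w e)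
    (htwd : ∀ (u : α) (d : γ), tw (u, Sum.inr d) = 0)
    (hnoneg : ∀ C : List (α ⊕ (β ⊕ γ)),
      IsDiCycle (auxAdj (extE (γ := γ) E) μ') C → 0 ≤ cycleWeight (auxW tw) C) :
    ∀ d₁ d₂ : γ, d₁ ≠ d₂ →
      (∃ l : List (α ⊕ (β ⊕ γ)),
        IsDiPath (auxAdj (extE (γ := γ) E) μ') (Sum.inl s) (Sum.inr (Sum.inr d₁)) l) →
      (∃ l : List (α ⊕ (β ⊕ γ)),
        IsDiPath (auxAdj (extE (γ := γ) E) μ') (Sum.inl s) (Sum.inr (Sum.inr d₂)) l) →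
      ∀ l₁ l₂ : List (α ⊕ (β ⊕ γ)),
        (IsDiPath (auxAdj (extE (γ := γ) E) μ') (Sum.inl s) (Sum.inr (Sum.inr d₁)) l₁ ∧
          ∀ l' : List (α ⊕ (β ⊕ γ)),
            IsDiPath (auxAdj (extE (γ := γ) E) μ') (Sum.inl s) (Sum.inr (Sum.inr d₁)) l' →
            walkWeight (auxW tw) l₁ ≤ walkWeight (auxW tw) l') →
        (IsDiPath (auxAdj (extE (γ := γ) E) μ') (Sum.inl s) (Sum.inr (Sum.inr d₂)) l₂ ∧
          ∀ l' : List (α ⊕ (β ⊕ γ)),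
            IsDiPath (auxAdj (extE (γ := γ) E) μ') (Sum.inl s) (Sum.inr (Sum.inr d₂)) l' →
            walkWeight (auxW tw) l₂ ≤ walkWeight (auxW tw) l') →
        walkWeight (auxW tw) l₁ = walkWeight (auxW tw) l₂ :=
  shortest_path_weights_to_dummies_equal_general E μ' s tw hμ' htwd hnoneg
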